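/- arXiv:2403.01787 — 3 statements merged into one kernel-verified Lean document; each statement's English description precedes it below -/
import Mathlib

section
/- For any real T ≥ 1 and any σ with 1/2 ≤ σ ≤ 1, the double sum ∑_{0<m<n<T} 1/(m^σ n^σ log(n/m)) is O(T^{2-2σ} log T), with the implied constant uniform in σ on any interval [1/2, σ₀] with σ₀ < 1. -/
open Finset

lemma sum_rpow_telescope {p : ℝ} (hp : 0 < p) (hp1 : p ≤ 1) (M : ℕ) :
    ∑ k ∈ Finset.Icc 1 M, (k:ℝ)^(p-1) ≤ (M:ℝ)^p / p := by
  induction M with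
  | zero => simp [Real.zero_rpow hp.ne']
  | succ M ih =>
    rw [Finset.sum_Icc_succ_top (Nat.one_le_iff_ne_zero.mpr (Nat.succ_ne_zero M))]
    have hb : (0:ℝ) < (M:ℝ) + 1 := by positivity
    have hs : (-1 : ℝ) ≤ -1/((M:ℝ)+1) := by
      rw [neg_div]
      simp only [neg_le_neg_iff]
      rw [div_le_one hb]
      linarith [Nat.cast_nonneg (α := ℝ) M]
    have hber := rpow_one_add_le_one_add_mul_self hs hp.le hp1
    have h1s : 1 + (-1/((M:ℝ)+1)) = (M:ℝ)/((M:ℝ)+1) := by field_simp; ring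
    rw [h1s] at hber
    have hdiv : ((M:ℝ)/((M:ℝ)+1))^p = (M:ℝ)^p / ((M:ℝ)+1)^p :=
      Real.div_rpow (Nat.cast_nonneg M) hb.le p
    rw [hdiv] at hber
    have hbp : (0:ℝ) < ((M:ℝ)+1)^p := Real.rpow_pos_of_pos hb p
    have key : (M:ℝ)^p + p * ((M:ℝ)+1)^(p-1) ≤ ((M:ℝ)+1)^p := by
      have hsub : ((M:ℝ)+1)^(p-1) = ((M:ℝ)+1)^p / ((M:ℝ)+1) := by
        rw [Real.rpow_sub hb, Real.rpow_one]
      rw [hsub]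
      have := mul_le_mul_of_nonneg_right hber hbp.le
      rw [div_mul_cancel₀ _ hbp.ne'] at this
      have hexp : (1 + p * (-1/((M:ℝ)+1))) * ((M:ℝ)+1)^p
          = ((M:ℝ)+1)^p - p * (((M:ℝ)+1)^p / ((M:ℝ)+1)) := by
        field_simp
        ring
      rw [hexp] at this
      linarith
    push_cast
    calc ∑ k ∈ Finset.Icc 1 M, (k:ℝ)^(p-1) + ((M:ℝ)+1)^(p-1)
        ≤ (M:ℝ)^p/p + ((M:ℝ)+1)^(p-1) := by linarith
      _ ≤ ((M:ℝ)+1)^p / p := by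
          rw [div_add' _ _ _ hp.ne', div_le_div_iff₀ hp hp]
          nlinarith

lemma inner_sum_le (N m : ℕ) (c : ℝ) (hc : 0 ≤ c) (T : ℝ) (hT : 1 ≤ T)
    (hmT : ((m - 1 : ℕ) : ℝ) ≤ T) :
    ∑ n ∈ Finset.range N, (if m < n ∧ n < 2*m then c / ((n:ℝ) - (m:ℝ)) else 0)
      ≤ c * (1 + Real.log T) := by
  have hlogT : 0 ≤ Real.log T := Real.log_nonneg hT
  calc ∑ n ∈ Finset.range N, (if m < n ∧ n < 2*m then c / ((n:ℝ) - (m:ℝ)) else 0)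
      = ∑ n ∈ (Finset.range N).filter (fun n => m < n ∧ n < 2*m), c / ((n:ℝ) - (m:ℝ)) :=
        (Finset.sum_filter _ _).symm
    _ ≤ ∑ n ∈ Finset.Ioo m (2*m), c / ((n:ℝ) - (m:ℝ)) := by
        apply Finset.sum_le_sum_of_subset_of_nonneg
        · intro n hn
          simp only [Finset.mem_filter, Finset.mem_range] at hn
          exact Finset.mem_Ioo.mpr ⟨hn.2.1, hn.2.2⟩
        · intro n hn _
          have hmn : m < n := (Finset.mem_Ioo.mp hn).1
          have : (0:ℝ) < (n:ℝ) - m := by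
            have : (m:ℝ) < n := by exact_mod_cast hmn
            linarith
          exact div_nonneg hc this.le
    _ = ∑ n ∈ Finset.Ico (m+1) (2*m), c / ((n:ℝ) - (m:ℝ)) := by rw [Finset.Ico_add_one_left_eq_Ioo]
    _ = ∑ i ∈ Finset.range (2*m - (m+1)), c / (((m+1+i : ℕ):ℝ) - (m:ℝ)) :=
        Finset.sum_Ico_eq_sum_range _ _ _
    _ = c * ∑ i ∈ Finset.range (m-1), (1 / ((i:ℝ)+1)) := by
        rw [show 2*m - (m+1) = m - 1 by omega, Finset.mul_sum]
        apply Finset.sum_congr rfl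
        intro i _
        push_cast
        rw [div_eq_mul_one_div]
        ring_nf
    _ ≤ c * (1 + Real.log T) := by
        apply mul_le_mul_of_nonneg_left _ hc
        have he : ∑ i ∈ Finset.range (m-1), (1 / ((i:ℝ)+1)) = ((harmonic (m-1) : ℚ) : ℝ) := by
          rw [harmonic]
          push_cast
          simp [one_div]
        rw [he]
        calc ((harmonic (m-1) : ℚ) : ℝ) ≤ 1 + Real.log (m-1 : ℕ) := harmonic_le_one_add_log _
          _ ≤ 1 + Real.log T := by
              rcases Nat.eq_zero_or_pos (m-1) with h0 | hpos
              · simp [h0]; linarith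
              · have h1 : (0:ℝ) < ((m-1 : ℕ):ℝ) := by exact_mod_cast hpos
                have := Real.log_le_log h1 hmT
                linarith

lemma single_sum_le {σ : ℝ} (hσpos : 0 < σ) (h1σ : 0 < 1 - σ) (N : ℕ) (hN1 : 1 ≤ N)
    (T : ℝ) (hcast : ((N - 1 : ℕ):ℝ) ≤ T) :
    ∑ k ∈ Finset.range N, 1/(k:ℝ)^σ ≤ T^(1-σ)/(1-σ) := by
  have h0 : ∑ k ∈ Finset.range N, 1/(k:ℝ)^σ = ∑ k ∈ Finset.Icc 1 (N-1), (k:ℝ)^((1-σ)-1) := by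
    rw [Finset.range_eq_Ico, Finset.sum_eq_sum_Ico_succ_bot hN1]
    rw [show (0:ℕ) + 1 = 1 from rfl, ← Finset.Ico_add_one_right_eq_Icc (a := 1) (b := N - 1),
      Nat.sub_add_cancel hN1]
    rw [Nat.cast_zero, Real.zero_rpow hσpos.ne', div_zero, zero_add]
    apply Finset.sum_congr rfl
    intro k _
    rw [show (1 - σ) - 1 = -σ by ring, Real.rpow_neg (Nat.cast_nonneg k), one_div]
  rw [h0]
  calc ∑ k ∈ Finset.Icc 1 (N-1), (k:ℝ)^((1-σ)-1) ≤ ((N-1 : ℕ):ℝ)^(1-σ)/(1-σ) :=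
        sum_rpow_telescope h1σ (by linarith) _
    _ ≤ T^(1-σ)/(1-σ) :=
        (div_le_div_iff_of_pos_right h1σ).mpr (Real.rpow_le_rpow (Nat.cast_nonneg _) hcast h1σ.le)

lemma termA {σ : ℝ} (hσpos : 0 < σ) {m n : ℕ} (hm : 0 < m) (hmn : 2*m ≤ n) :
    1 / ((m:ℝ)^σ * (n:ℝ)^σ * Real.log ((n:ℝ)/m)) ≤
      (1/Real.log 2) * (1/(m:ℝ)^σ * (1/(n:ℝ)^σ)) := by
  have hm' : (0:ℝ) < m := by exact_mod_cast hm
  have hn' : (0:ℝ) < n := by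
    have : 0 < n := lt_of_lt_of_le (by omega) hmn
    exact_mod_cast this
  have hP : (0:ℝ) < (m:ℝ)^σ := Real.rpow_pos_of_pos hm' σ
  have hQ : (0:ℝ) < (n:ℝ)^σ := Real.rpow_pos_of_pos hn' σ
  have h2 : (2:ℝ) ≤ (n:ℝ)/m := by
    rw [le_div_iff₀ hm']
    have : ((2*m : ℕ):ℝ) ≤ n := by exact_mod_cast hmn
    push_cast at this
    linarith
  have hlog : Real.log 2 ≤ Real.log ((n:ℝ)/m) := Real.log_le_log (by norm_num) h2
  have hlog2 : (0:ℝ) < Real.log 2 := Real.log_pos one_lt_two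
  rw [show (1/Real.log 2) * (1/(m:ℝ)^σ * (1/(n:ℝ)^σ)) =
      1 / ((m:ℝ)^σ * (n:ℝ)^σ * Real.log 2) by field_simp]
  apply one_div_le_one_div_of_le (by positivity)
  exact mul_le_mul_of_nonneg_left hlog (by positivity)

lemma termB {σ : ℝ} (hσpos : 0 < σ) (hσ1 : σ ≤ 1) {m n : ℕ} (hm : 0 < m) (hmn : m < n)
    (hn2 : n < 2*m) :
    1 / ((m:ℝ)^σ * (n:ℝ)^σ * Real.log ((n:ℝ)/m)) ≤
      2*(m:ℝ)^(1-2*σ) / ((n:ℝ) - (m:ℝ)) := by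
  have hm' : (0:ℝ) < m := by exact_mod_cast hm
  have hn' : (0:ℝ) < n := by exact_mod_cast (lt_trans hm hmn)
  have hmn' : (m:ℝ) < n := by exact_mod_cast hmn
  have hn2' : (n:ℝ) ≤ 2*m := by
    have : (n:ℝ) < ((2*m:ℕ):ℝ) := by exact_mod_cast hn2
    push_cast at this; linarith
  have hP : (0:ℝ) < (m:ℝ)^σ := Real.rpow_pos_of_pos hm' σ
  have hQ : (0:ℝ) < (n:ℝ)^σ := Real.rpow_pos_of_pos hn' σ
  have hx : 1 < (n:ℝ)/m := (one_lt_div hm').mpr hmn'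
  have hlogpos : 0 < Real.log ((n:ℝ)/m) := Real.log_pos hx
  have hlog : ((n:ℝ)-m)/n ≤ Real.log ((n:ℝ)/m) := by
    have h1 := Real.log_le_sub_one_of_pos (x := (m:ℝ)/n) (by positivity)
    have h2 : Real.log ((n:ℝ)/m) = - Real.log ((m:ℝ)/n) := by
      rw [← Real.log_inv]
      congr 1
      field_simp
    rw [h2]
    have h3 : ((n:ℝ)-m)/n = 1 - (m:ℝ)/n := by field_simp
    rw [h3]
    linarith
  have hkey : (n:ℝ) ≤ 2*(m:ℝ)^(1-σ) * (n:ℝ)^σ := by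
    have h1 : (n:ℝ)^(1-σ) ≤ ((2:ℝ)*m)^(1-σ) :=
      Real.rpow_le_rpow hn'.le hn2' (by linarith)
    have h2 : ((2:ℝ)*m)^(1-σ) = (2:ℝ)^(1-σ) * (m:ℝ)^(1-σ) :=
      Real.mul_rpow (by norm_num) hm'.le
    have h3 : (2:ℝ)^(1-σ) ≤ 2 := by
      calc (2:ℝ)^(1-σ) ≤ (2:ℝ)^(1:ℝ) :=
            Real.rpow_le_rpow_of_exponent_le one_le_two (by linarith)
        _ = 2 := Real.rpow_one 2
    have h4 : (n:ℝ) = (n:ℝ)^(1-σ) * (n:ℝ)^σ := by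
      rw [← Real.rpow_add hn', sub_add_cancel, Real.rpow_one]
    have h5 : (0:ℝ) ≤ (m:ℝ)^(1-σ) := Real.rpow_nonneg hm'.le _
    calc (n:ℝ) = (n:ℝ)^(1-σ) * (n:ℝ)^σ := h4
      _ ≤ ((2:ℝ)*m)^(1-σ) * (n:ℝ)^σ :=
            mul_le_mul_of_nonneg_right h1 hQ.le
      _ = ((2:ℝ)^(1-σ) * (m:ℝ)^(1-σ)) * (n:ℝ)^σ := by rw [h2]
      _ ≤ (2 * (m:ℝ)^(1-σ)) * (n:ℝ)^σ := by
            apply mul_le_mul_of_nonneg_right _ hQ.le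
            exact mul_le_mul_of_nonneg_right h3 h5
  have hnm : (0:ℝ) < (n:ℝ) - m := by linarith
  calc 1 / ((m:ℝ)^σ * (n:ℝ)^σ * Real.log ((n:ℝ)/m))
      ≤ 1 / ((m:ℝ)^σ * (n:ℝ)^σ * (((n:ℝ)-m)/n)) := by
        apply one_div_le_one_div_of_le (by positivity)
        exact mul_le_mul_of_nonneg_left hlog (by positivity)
    _ ≤ 2*(m:ℝ)^(1-2*σ) / ((n:ℝ) - (m:ℝ)) := by
        rw [div_le_div_iff₀ (by positivity) hnm]
        have hid : 2*(m:ℝ)^(1-2*σ) * ((m:ℝ)^σ * (n:ℝ)^σ * (((n:ℝ)-m)/n))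
            = (2*(m:ℝ)^(1-σ) * (n:ℝ)^σ) * (((n:ℝ)-m)/n) := by
          rw [show 2*(m:ℝ)^(1-2*σ) * ((m:ℝ)^σ * (n:ℝ)^σ * (((n:ℝ)-m)/n))
              = 2*((m:ℝ)^(1-2*σ) * (m:ℝ)^σ) * (n:ℝ)^σ * (((n:ℝ)-m)/n) by ring,
            ← Real.rpow_add hm', show (1-2*σ) + σ = 1 - σ by ring]
        rw [one_mul, hid]
        calc (n:ℝ) - m = (n:ℝ) * (((n:ℝ)-m)/n) := by field_simp
          _ ≤ (2*(m:ℝ)^(1-σ) * (n:ℝ)^σ) * (((n:ℝ)-m)/n) := by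
              apply mul_le_mul_of_nonneg_right hkey
              positivity

theorem double_sum_bound (σ₀ : ℝ) (hσ₀ : σ₀ < 1) :
    ∃ C > 0, ∀ T : ℝ, 1 ≤ T → ∀ σ : ℝ, 1/2 ≤ σ → σ ≤ σ₀ →
      ∑ p ∈ (Finset.range ⌈T⌉₊ ×ˢ Finset.range ⌈T⌉₊).filter
          (fun p => 0 < p.1 ∧ p.1 < p.2),
        1 / ((p.1 : ℝ) ^ σ * (p.2 : ℝ) ^ σ * Real.log ((p.2 : ℝ) / p.1)) ≤
      C * T ^ (2 - 2*σ) * Real.log T := by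
  have h1σ₀ : (0:ℝ) < 1 - σ₀ := by linarith
  have hlog2 : (0:ℝ) < Real.log 2 := Real.log_pos one_lt_two
  set K1 : ℝ := (1/Real.log 2) * (1/(1-σ₀))^2 with hK1def
  set K2 : ℝ := 1/(1-σ₀) with hK2def
  have hK1 : 0 < K1 := mul_pos (div_pos one_pos hlog2) (pow_pos (div_pos one_pos h1σ₀) 2)
  have hK2 : 0 < K2 := div_pos one_pos h1σ₀
  have hC : 0 < K1/Real.log 2 + K2/Real.log 2 + K2 :=
    add_pos (add_pos (div_pos hK1 hlog2) (div_pos hK2 hlog2)) hK2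
  refine ⟨K1/Real.log 2 + K2/Real.log 2 + K2, hC, ?_⟩
  intro T hT σ hσl hσr
  have hT0 : (0:ℝ) < T := by linarith
  have hσpos : (0:ℝ) < σ := by linarith
  have h1σ : (0:ℝ) < 1 - σ := by linarith
  have hσ1 : σ ≤ 1 := by linarith
  have hXpos : (0:ℝ) < T^(2-2*σ) := Real.rpow_pos_of_pos hT0 _
  by_cases hT2 : T ≤ 2
  · have hN2 : ⌈T⌉₊ ≤ 2 := Nat.ceil_le.mpr (by exact_mod_cast hT2)
    have hempty : (Finset.range ⌈T⌉₊ ×ˢ Finset.range ⌈T⌉₊).filter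
        (fun p => 0 < p.1 ∧ p.1 < p.2) = ∅ := by
      apply Finset.eq_empty_of_forall_notMem
      intro p hp
      simp only [Finset.mem_filter, Finset.mem_product, Finset.mem_range] at hp
      omega
    rw [hempty, Finset.sum_empty]
    exact mul_nonneg (mul_nonneg hC.le hXpos.le) (Real.log_nonneg hT)
  · push_neg at hT2
    have hlogT2 : Real.log 2 ≤ Real.log T := Real.log_le_log (by norm_num) hT2.le
    have hlogT : (0:ℝ) < Real.log T := lt_of_lt_of_le hlog2 hlogT2
    set N := ⌈T⌉₊ with hNdef
    have hN1 : 1 ≤ N := Nat.one_le_ceil_iff.mpr hT0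
    have hcast : ((N - 1 : ℕ):ℝ) ≤ T := by
      have h := Nat.ceil_lt_add_one hT0.le
      rw [Nat.cast_sub hN1]
      push_cast
      push_cast at h
      linarith
    set S := (Finset.range N ×ˢ Finset.range N).filter (fun p => 0 < p.1 ∧ p.1 < p.2)
      with hSdef
    rw [← Finset.sum_filter_add_sum_filter_not S (fun p => 2*p.1 ≤ p.2)]
    have hsingle := single_sum_le hσpos h1σ N hN1 T hcast
    have hsnn : (0:ℝ) ≤ ∑ k ∈ Finset.range N, 1/(k:ℝ)^σ :=
      Finset.sum_nonneg fun k _ => by positivity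
    have hA : ∑ p ∈ S.filter (fun p => 2*p.1 ≤ p.2),
        1 / ((p.1:ℝ)^σ * (p.2:ℝ)^σ * Real.log ((p.2:ℝ)/p.1)) ≤ K1 * T^(2-2*σ) := by
      calc ∑ p ∈ S.filter (fun p => 2*p.1 ≤ p.2),
            1 / ((p.1:ℝ)^σ * (p.2:ℝ)^σ * Real.log ((p.2:ℝ)/p.1))
          ≤ ∑ p ∈ S.filter (fun p => 2*p.1 ≤ p.2),
            (1/Real.log 2) * (1/(p.1:ℝ)^σ * (1/(p.2:ℝ)^σ)) := by
            apply Finset.sum_le_sum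
            intro p hp
            simp only [hSdef, Finset.mem_filter, Finset.mem_product, Finset.mem_range] at hp
            exact termA hσpos hp.1.2.1 hp.2
        _ ≤ ∑ p ∈ Finset.range N ×ˢ Finset.range N,
            (1/Real.log 2) * (1/(p.1:ℝ)^σ * (1/(p.2:ℝ)^σ)) := by
            apply Finset.sum_le_sum_of_subset_of_nonneg
            · refine (Finset.filter_subset _ _).trans ?_
              rw [hSdef]
              exact Finset.filter_subset _ _
            · intro p _ _
              positivity
        _ = (1/Real.log 2) * ((∑ k ∈ Finset.range N, 1/(k:ℝ)^σ) *
              (∑ k ∈ Finset.range N, 1/(k:ℝ)^σ)) := by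
            rw [Finset.sum_product]
            have hrow : ∀ x : ℕ, ∑ y ∈ Finset.range N,
                (1/Real.log 2) * (1/(x:ℝ)^σ * (1/(y:ℝ)^σ))
                = (1/Real.log 2) * (1/(x:ℝ)^σ) * ∑ y ∈ Finset.range N, 1/(y:ℝ)^σ := by
              intro x
              rw [Finset.mul_sum]
              apply Finset.sum_congr rfl
              intro y _
              ring
            rw [Finset.sum_congr rfl (fun x _ => hrow x), ← Finset.sum_mul, ← Finset.mul_sum]
            ring
        _ ≤ (1/Real.log 2) * ((T^(1-σ)/(1-σ)) * (T^(1-σ)/(1-σ))) := by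
            apply mul_le_mul_of_nonneg_left _ (by positivity)
            exact mul_le_mul hsingle hsingle hsnn (by positivity)
        _ ≤ K1 * T^(2-2*σ) := by
            have hTT : T^(1-σ) * T^(1-σ) = T^(2-2*σ) := by
              rw [← Real.rpow_add hT0, show (1-σ) + (1-σ) = 2-2*σ by ring]
            have e1 : (T^(1-σ)/(1-σ)) * (T^(1-σ)/(1-σ)) = T^(2-2*σ) * (1/(1-σ))^2 := by
              rw [← hTT]; ring
            rw [e1, show (1/Real.log 2) * (T^(2-2*σ) * (1/(1-σ))^2)
              = ((1/Real.log 2) * (1/(1-σ))^2) * T^(2-2*σ) by ring]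
            apply mul_le_mul_of_nonneg_right _ hXpos.le
            rw [hK1def]
            apply mul_le_mul_of_nonneg_left _ (by positivity)
            apply pow_le_pow_left₀ (by positivity)
            exact one_div_le_one_div_of_le h1σ₀ (by linarith)
    have hB : ∑ p ∈ S.filter (fun p => ¬ 2*p.1 ≤ p.2),
        1 / ((p.1:ℝ)^σ * (p.2:ℝ)^σ * Real.log ((p.2:ℝ)/p.1))
        ≤ K2 * ((1+Real.log T) * T^(2-2*σ)) := by
      have hnnB : ∀ p : ℕ × ℕ,
          0 ≤ (if p.1 < p.2 ∧ p.2 < 2*p.1 then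
            2*((p.1:ℝ))^(1-2*σ) / ((p.2:ℝ) - (p.1:ℝ)) else 0) := by
        intro p
        split_ifs with h
        · have : ((p.1:ℝ)) < p.2 := by exact_mod_cast h.1
          apply div_nonneg (by positivity)
          linarith
        · exact le_refl 0
      calc ∑ p ∈ S.filter (fun p => ¬ 2*p.1 ≤ p.2),
            1 / ((p.1:ℝ)^σ * (p.2:ℝ)^σ * Real.log ((p.2:ℝ)/p.1))
          ≤ ∑ p ∈ S.filter (fun p => ¬ 2*p.1 ≤ p.2),
            (if p.1 < p.2 ∧ p.2 < 2*p.1 then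
              2*((p.1:ℝ))^(1-2*σ) / ((p.2:ℝ) - (p.1:ℝ)) else 0) := by
            apply Finset.sum_le_sum
            intro p hp
            simp only [hSdef, Finset.mem_filter, Finset.mem_product, Finset.mem_range,
              not_le] at hp
            rw [if_pos ⟨hp.1.2.2, hp.2⟩]
            exact termB hσpos hσ1 hp.1.2.1 hp.1.2.2 hp.2
        _ ≤ ∑ p ∈ Finset.range N ×ˢ Finset.range N,
            (if p.1 < p.2 ∧ p.2 < 2*p.1 then
              2*((p.1:ℝ))^(1-2*σ) / ((p.2:ℝ) - (p.1:ℝ)) else 0) := by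
            apply Finset.sum_le_sum_of_subset_of_nonneg
            · refine (Finset.filter_subset _ _).trans ?_
              rw [hSdef]
              exact Finset.filter_subset _ _
            · intro p _ _
              exact hnnB p
        _ = ∑ m ∈ Finset.range N, ∑ n ∈ Finset.range N,
            (if m < n ∧ n < 2*m then 2*((m:ℝ))^(1-2*σ) / ((n:ℝ) - (m:ℝ)) else 0) :=
            Finset.sum_product _ _ _
        _ ≤ ∑ m ∈ Finset.range N,
            (if m = 0 then 0 else 2*((m:ℝ))^(1-2*σ) * (1 + Real.log T)) := by
            apply Finset.sum_le_sum
            intro m hm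
            by_cases hm0 : m = 0
            · subst hm0
              simp
            · rw [if_neg hm0]
              have hmle : ((m - 1 : ℕ):ℝ) ≤ T := by
                refine le_trans ?_ hcast
                exact_mod_cast Nat.sub_le_sub_right (Nat.lt_of_lt_of_le
                  (Finset.mem_range.mp hm) (le_refl N)).le 1
              exact inner_sum_le N m _ (by positivity) T hT hmle
        _ = ∑ m ∈ Finset.Icc 1 (N-1), 2*((m:ℝ))^(1-2*σ) * (1 + Real.log T) := by
            rw [Finset.range_eq_Ico, Finset.sum_eq_sum_Ico_succ_bot hN1, if_pos rfl, zero_add]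
            rw [show (0:ℕ) + 1 = 1 from rfl, ← Finset.Ico_add_one_right_eq_Icc (a := 1) (b := N - 1),
              Nat.sub_add_cancel hN1]
            apply Finset.sum_congr rfl
            intro m hm
            rw [if_neg (by simp only [Finset.mem_Ico] at hm; omega)]
        _ ≤ K2 * ((1+Real.log T) * T^(2-2*σ)) := by
            have h22 : (0:ℝ) < 2-2*σ := by linarith
            have hsum2 : ∑ m ∈ Finset.Icc 1 (N-1), ((m:ℝ))^((2-2*σ)-1)
                ≤ ((N-1:ℕ):ℝ)^(2-2*σ)/(2-2*σ) := sum_rpow_telescope h22 (by linarith) _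
            have e2 : ∑ m ∈ Finset.Icc 1 (N-1), 2*((m:ℝ))^(1-2*σ) * (1 + Real.log T)
                = (2*(1 + Real.log T)) * ∑ m ∈ Finset.Icc 1 (N-1), ((m:ℝ))^((2-2*σ)-1) := by
              rw [Finset.mul_sum]
              apply Finset.sum_congr rfl
              intro m _
              rw [show (2-2*σ)-1 = 1-2*σ by ring]
              ring
            rw [e2]
            have h1L : (0:ℝ) ≤ 1 + Real.log T := by linarith
            calc (2*(1 + Real.log T)) * ∑ m ∈ Finset.Icc 1 (N-1), ((m:ℝ))^((2-2*σ)-1)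
                ≤ (2*(1 + Real.log T)) * (((N-1:ℕ):ℝ)^(2-2*σ)/(2-2*σ)) :=
                  mul_le_mul_of_nonneg_left hsum2 (by linarith)
              _ ≤ (2*(1 + Real.log T)) * (T^(2-2*σ)/(2-2*σ)) := by
                  apply mul_le_mul_of_nonneg_left _ (by linarith)
                  exact (div_le_div_iff_of_pos_right h22).mpr
                    (Real.rpow_le_rpow (Nat.cast_nonneg _) hcast h22.le)
              _ ≤ K2 * ((1+Real.log T) * T^(2-2*σ)) := by
                  rw [hK2def]
                  rw [show (2*(1 + Real.log T)) * (T^(2-2*σ)/(2-2*σ))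
                    = (1/(1-σ)) * ((1+Real.log T) * T^(2-2*σ)) by field_simp]
                  apply mul_le_mul_of_nonneg_right _ (by positivity)
                  exact one_div_le_one_div_of_le h1σ₀ (by linarith)
    have e1 : K1 * T^(2-2*σ) ≤ K1/Real.log 2 * T^(2-2*σ) * Real.log T := by
      rw [show K1/Real.log 2 * T^(2-2*σ) * Real.log T
        = (K1 * T^(2-2*σ)) * (Real.log T / Real.log 2) by ring]
      nth_rewrite 1 [← mul_one (K1 * T^(2-2*σ))]
      apply mul_le_mul_of_nonneg_left _ (by positivity)
      rw [le_div_iff₀ hlog2, one_mul]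
      exact hlogT2
    have e2 : K2 * T^(2-2*σ) ≤ K2/Real.log 2 * T^(2-2*σ) * Real.log T := by
      rw [show K2/Real.log 2 * T^(2-2*σ) * Real.log T
        = (K2 * T^(2-2*σ)) * (Real.log T / Real.log 2) by ring]
      nth_rewrite 1 [← mul_one (K2 * T^(2-2*σ))]
      apply mul_le_mul_of_nonneg_left _ (by positivity)
      rw [le_div_iff₀ hlog2, one_mul]
      exact hlogT2
    calc ∑ p ∈ S.filter (fun p => 2*p.1 ≤ p.2),
          1 / ((p.1:ℝ)^σ * (p.2:ℝ)^σ * Real.log ((p.2:ℝ)/p.1))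
        + ∑ p ∈ S.filter (fun p => ¬ 2*p.1 ≤ p.2),
          1 / ((p.1:ℝ)^σ * (p.2:ℝ)^σ * Real.log ((p.2:ℝ)/p.1))
        ≤ K1 * T^(2-2*σ) + K2 * ((1+Real.log T) * T^(2-2*σ)) := add_le_add hA hB
      _ = K1 * T^(2-2*σ) + K2 * T^(2-2*σ) + K2 * T^(2-2*σ) * Real.log T := by ring
      _ ≤ K1/Real.log 2 * T^(2-2*σ) * Real.log T + K2/Real.log 2 * T^(2-2*σ) * Real.log T
          + K2 * T^(2-2*σ) * Real.log T := by linarith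
      _ = (K1/Real.log 2 + K2/Real.log 2 + K2) * T^(2-2*σ) * Real.log T := by ring
end

section
/- For any finite nonzero integer vector (n_p)_{p≤Q} indexed by primes p ≤ Q with max_p |n_p| ≤ M, the real number ∑_{p≤Q} n_p log p is nonzero and satisfies |∑_{p≤Q} n_p log p| ≥ exp(-c·M·Q) for some absolute constant c > 0. -/
open Finset

private lemma fact_eval {S : Finset ℕ} (hp : ∀ p ∈ S, Nat.Prime p) (a : ℕ → ℕ) {q : ℕ}
    (hq : q ∈ S) : (∏ p ∈ S, p ^ a p).factorization q = a q := by
  rw [Nat.factorization_prod (fun p hp' => pow_ne_zero _ (hp p hp').pos.ne')]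
  rw [Finsupp.finset_sum_apply]
  rw [Finset.sum_eq_single q]
  · rw [(hp q hq).factorization_pow, Finsupp.single_apply, if_pos rfl]
  · intro p hpS hne
    rw [(hp p hpS).factorization_pow, Finsupp.single_apply, if_neg hne]
  · intro h; exact absurd hq h

theorem prime_log_combination_lower_bound :
    ∃ c > 0, ∀ Q : ℝ, 2 ≤ Q → ∀ M : ℕ, 1 ≤ M → ∀ n : ℕ → ℤ,
      (∃ p ∈ Nat.primesBelow (⌊Q⌋₊ + 1), n p ≠ 0) →
      (∀ p, |n p| ≤ M) →
      (∑ p ∈ Nat.primesBelow (⌊Q⌋₊ + 1), (n p : ℝ) * Real.log p) ≠ 0 ∧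
      Real.exp (-c * M * Q) ≤ |∑ p ∈ Nat.primesBelow (⌊Q⌋₊ + 1), (n p : ℝ) * Real.log p| := by
  refine ⟨3, by norm_num, fun Q hQ M hM n hex hbd => ?_⟩
  set S := Nat.primesBelow (⌊Q⌋₊ + 1) with hS
  set a : ℕ → ℕ := fun p => (n p).toNat with ha
  set b : ℕ → ℕ := fun p => (-(n p)).toNat with hbdef
  set m : ℕ := ∏ p ∈ S, p ^ a p with hm
  set k : ℕ := ∏ p ∈ S, p ^ b p with hk
  have hprime : ∀ p ∈ S, Nat.Prime p := fun p hp => Nat.prime_of_mem_primesBelow hp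
  have hmpos : 0 < m := Finset.prod_pos (fun p hp => pow_pos (hprime p hp).pos _)
  have hkpos : 0 < k := Finset.prod_pos (fun p hp => pow_pos (hprime p hp).pos _)
  -- the sum equals log m - log k
  have hlogm : Real.log m = ∑ p ∈ S, (a p : ℝ) * Real.log p := by
    rw [hm]
    push_cast
    rw [Real.log_prod (fun p hp => by
      have := (hprime p hp).pos
      positivity)]
    exact Finset.sum_congr rfl (fun p hp => by rw [Real.log_pow])
  have hlogk : Real.log k = ∑ p ∈ S, (b p : ℝ) * Real.log p := by
    rw [hk]
    push_cast
    rw [Real.log_prod (fun p hp => by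
      have := (hprime p hp).pos
      positivity)]
    exact Finset.sum_congr rfl (fun p hp => by rw [Real.log_pow])
  have hsum : (∑ p ∈ S, (n p : ℝ) * Real.log p) = Real.log m - Real.log k := by
    rw [hlogm, hlogk, ← Finset.sum_sub_distrib]
    refine Finset.sum_congr rfl (fun p hp => ?_)
    have hab : ((a p : ℤ) : ℝ) - ((b p : ℤ) : ℝ) = (n p : ℝ) := by
      have : (a p : ℤ) - (b p : ℤ) = n p := by simp only [ha, hbdef]; omega
      rw [← this]; push_cast; ring
    push_cast at hab ⊢
    rw [← sub_mul, hab]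
  -- m ≠ k
  have hmk : m ≠ k := by
    intro heq
    obtain ⟨q, hq, hnq⟩ := hex
    have h1 : a q = b q := by
      have := congrFun (congrArg (fun x => (Nat.factorization x : ℕ → ℕ)) heq) q
      simpa [hm, hk, fact_eval hprime a hq, fact_eval hprime b hq] using this
    simp only [ha, hbdef] at h1
    omega
  -- bounds on m and k
  have hbound : ∀ c : ℕ → ℕ, (∀ p, c p ≤ M) → (∏ p ∈ S, p ^ c p) ≤ 4 ^ (M * ⌊Q⌋₊) := by
    intro c hc
    calc (∏ p ∈ S, p ^ c p) ≤ ∏ p ∈ S, p ^ M :=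
          Finset.prod_le_prod (fun p _ => Nat.zero_le _)
            (fun p hp => Nat.pow_le_pow_right (hprime p hp).pos (hc p))
      _ = (∏ p ∈ S, p) ^ M := by rw [Finset.prod_pow]
      _ = (primorial ⌊Q⌋₊) ^ M := by
          congr 1
      _ ≤ (4 ^ ⌊Q⌋₊) ^ M := Nat.pow_le_pow_left (primorial_le_4_pow _) M
      _ = 4 ^ (M * ⌊Q⌋₊) := by rw [← pow_mul, Nat.mul_comm]
  have haM : ∀ p, a p ≤ M := fun p => by
    have := abs_le.mp (hbd p)
    show (n p).toNat ≤ M; omega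
  have hbM : ∀ p, b p ≤ M := fun p => by
    have := abs_le.mp (hbd p)
    show (-(n p)).toNat ≤ M; omega
  have hmB : m ≤ 4 ^ (M * ⌊Q⌋₊) := hbound a haM
  have hkB : k ≤ 4 ^ (M * ⌊Q⌋₊) := hbound b hbM
  -- work with u = max, v = min
  set u : ℕ := max m k with hu
  set v : ℕ := min m k with hv
  have hvu : v + 1 ≤ u := by
    rcases le_total m k with h | h
    · have h1 : u = k := max_eq_right h
      have h2 : v = m := min_eq_left h
      omega
    · have h1 : u = m := max_eq_left h
      have h2 : v = k := min_eq_right h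
      omega
  have habs : |Real.log m - Real.log k| = Real.log u - Real.log v := by
    rcases le_total m k with h | h
    · rw [abs_of_nonpos (by
        have := Real.log_le_log (by exact_mod_cast hmpos) (by exact_mod_cast h : (m:ℝ) ≤ k)
        linarith)]
      simp only [hu, hv, Nat.max_eq_right h, Nat.min_eq_left h]
      ring
    · rw [abs_of_nonneg (by
        have := Real.log_le_log (by exact_mod_cast hkpos) (by exact_mod_cast h : (k:ℝ) ≤ m)
        linarith)]
      simp only [hu, hv, Nat.max_eq_left h, Nat.min_eq_right h]
  have hupos : 0 < u := lt_of_lt_of_le hmpos (le_max_left _ _)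
  have hvpos : 0 < v := lt_min hmpos hkpos
  -- lower bound: log u - log v ≥ 1/u
  have hlow : 1 / (u : ℝ) ≤ Real.log u - Real.log v := by
    have h1 : Real.log ((v : ℝ) / u) ≤ (v : ℝ) / u - 1 :=
      Real.log_le_sub_one_of_pos (by positivity)
    have h2 : Real.log ((v : ℝ) / u) = Real.log v - Real.log u :=
      Real.log_div (by exact_mod_cast hvpos.ne') (by exact_mod_cast hupos.ne')
    have h3 : (v : ℝ) + 1 ≤ u := by exact_mod_cast hvu
    have h4 : (0 : ℝ) < u := by exact_mod_cast hupos
    rw [h2] at h1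
    rw [div_le_iff₀ h4]
    have h6 : ((v:ℝ)/u - 1) * u = v - u := by field_simp
    have h7 := mul_le_mul_of_nonneg_right h1 h4.le
    linarith
  -- upper bound on log u
  have hlogu : Real.log u ≤ 3 * M * Q := by
    have huB : (u : ℝ) ≤ (4 : ℝ) ^ (M * ⌊Q⌋₊) := by
      have : u ≤ 4 ^ (M * ⌊Q⌋₊) := max_le hmB hkB
      exact_mod_cast this
    have h4 : Real.log u ≤ (M * ⌊Q⌋₊ : ℕ) * Real.log 4 := by
      calc Real.log u ≤ Real.log ((4:ℝ) ^ (M * ⌊Q⌋₊)) :=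
            Real.log_le_log (by exact_mod_cast hupos) huB
        _ = (M * ⌊Q⌋₊ : ℕ) * Real.log 4 := by rw [Real.log_pow]
    have hlog4 : Real.log 4 ≤ 3 := by
      have := Real.log_le_sub_one_of_pos (show (0:ℝ) < 4 by norm_num)
      linarith
    have hfloor : (⌊Q⌋₊ : ℝ) ≤ Q := Nat.floor_le (by linarith)
    have hM1 : (1 : ℝ) ≤ M := by exact_mod_cast hM
    calc Real.log u ≤ (M * ⌊Q⌋₊ : ℕ) * Real.log 4 := h4
      _ ≤ (M * ⌊Q⌋₊ : ℕ) * 3 := by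
          apply mul_le_mul_of_nonneg_left hlog4 (by positivity)
      _ = 3 * M * (⌊Q⌋₊ : ℝ) := by push_cast; ring
      _ ≤ 3 * M * Q := by
          apply mul_le_mul_of_nonneg_left hfloor (by positivity)
  -- combine
  have hexp : Real.exp (-3 * M * Q) ≤ 1 / (u : ℝ) := by
    rw [le_div_iff₀ (by exact_mod_cast hupos)]
    calc Real.exp (-3 * M * Q) * u = Real.exp (-3 * M * Q) * Real.exp (Real.log u) := by
          rw [Real.exp_log (by exact_mod_cast hupos)]
      _ = Real.exp (-3 * M * Q + Real.log u) := by rw [Real.exp_add]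
      _ ≤ Real.exp 0 := Real.exp_le_exp.mpr (by linarith)
      _ = 1 := Real.exp_zero
  have hfinal : Real.exp (-3 * M * Q) ≤ |∑ p ∈ S, (n p : ℝ) * Real.log p| := by
    rw [hsum, habs]
    linarith
  refine ⟨?_, by exact_mod_cast hfinal⟩
  intro h0
  rw [hS] at h0
  rw [← hS] at h0
  rw [h0, abs_zero] at hfinal
  exact absurd hfinal (not_le.mpr (Real.exp_pos _))
end

section
/- For σ₀ ∈ (1/2, 1), integer k ≥ 0, and Q ≥ 2, the sum over prime powers p^ℓ > Q with p ≤ Q of ℓ^{k-1}(log p)^k / p^{ℓσ₀} is ≪_{k,σ₀} Q^{1/2-σ₀}(log Q)^{k-1} (interpreting (log Q)^{-1} as 1/log Q when k = 0). -/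
open Real

-- core Bernoulli-type inequalities
lemma core_upper {a u : ℝ} (ha : 0 < a) (hu : 0 < u) : 1 - a*u ≤ (1+u) ^ (-a) := by
  have h1 : (1+u) ^ (-a) = Real.exp (Real.log (1+u) * (-a)) :=
    Real.rpow_def_of_pos (by linarith) _
  have h2 : Real.log (1+u) ≤ u := by
    have := Real.log_le_sub_one_of_pos (x := 1+u) (by linarith); linarith
  have h3 : Real.log (1+u) * (-a) + 1 ≤ Real.exp (Real.log (1+u) * (-a)) :=
    Real.add_one_le_exp _
  have h4 : 0 ≤ Real.log (1+u) := Real.log_nonneg (by linarith)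
  nlinarith [mul_le_mul_of_nonneg_right h2 ha.le]

lemma core_lower {a u : ℝ} (ha : 0 < a) (hu : 0 < u) (hu1 : u ≤ 1) :
    (1+u) ^ (-a) ≤ 1 - a*u/(a+2) := by
  have hpos : (0:ℝ) < 1 + u := by linarith
  have hlog : u/(1+u) ≤ Real.log (1+u) := by
    have := Real.log_le_sub_one_of_pos (x := (1+u)⁻¹) (by positivity)
    rw [Real.log_inv] at this
    have : -Real.log (1+u) ≤ (1+u)⁻¹ - 1 := this
    have he : (1+u)⁻¹ - 1 = -(u/(1+u)) := by field_simp; ring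
    linarith [he ▸ this]
  have h1 : (1+u) ^ a = Real.exp (Real.log (1+u) * a) := Real.rpow_def_of_pos hpos _
  have h2 : 1 + u/(1+u) * a ≤ (1+u) ^ a := by
    rw [h1]
    have := Real.add_one_le_exp (Real.log (1+u) * a)
    nlinarith [mul_le_mul_of_nonneg_right hlog ha.le]
  have h3 : (1+u) ^ (-a) = ((1+u) ^ a)⁻¹ := Real.rpow_neg hpos.le a
  rw [h3]
  have hapos : (0:ℝ) < (1+u)^a := Real.rpow_pos_of_pos hpos a
  have hs : 0 ≤ 1 - a*u/(a+2) := by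
    rw [sub_nonneg, div_le_one (by linarith)]
    nlinarith
  have key : 1 ≤ (1 - a*u/(a+2)) * (1 + u/(1+u)*a) := by
    rw [← sub_nonneg]
    have e : (1 - a*u/(a+2)) * (1 + u/(1+u)*a) - 1 = a*u*(1-u)*(a+1) / ((1+u)*(a+2)) := by
      field_simp; ring
    rw [e]
    apply div_nonneg _ (by positivity)
    have : 0 ≤ 1 - u := by linarith
    positivity
  have h6 := mul_le_mul_of_nonneg_left h2 hs
  rw [inv_le_iff_one_le_mul₀ hapos]
  calc (1:ℝ) ≤ (1 - a*u/(a+2)) * (1 + u/(1+u)*a) := key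
    _ ≤ (1 - a*u/(a+2)) * (1+u)^a := h6

lemma diff_upper {a x : ℝ} (ha : 0 < a) (hx : 1 ≤ x) :
    x ^ (-a) - (x+1) ^ (-a) ≤ a * x ^ (-a-1) := by
  have hx0 : (0:ℝ) < x := by linarith
  have hu : 0 < x⁻¹ := by positivity
  have h1 : x + 1 = x * (1 + x⁻¹) := by field_simp
  have h2 : (x+1) ^ (-a) = x ^ (-a) * (1+x⁻¹) ^ (-a) := by
    rw [h1, Real.mul_rpow hx0.le (by positivity)]
  have h3 : x ^ (-a-1) = x ^ (-a) * x⁻¹ := by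
    rw [show -a-1 = -a + -1 by ring, Real.rpow_add hx0, Real.rpow_neg_one]
  have hcore := core_upper ha hu
  have hnn : (0:ℝ) ≤ x ^ (-a) := (Real.rpow_pos_of_pos hx0 _).le
  rw [h2, h3]
  nlinarith [mul_le_mul_of_nonneg_left hcore hnn]

lemma diff_lower {a x : ℝ} (ha : 0 < a) (hx : 1 ≤ x) :
    a/(a+2) * x ^ (-a-1) ≤ x ^ (-a) - (x+1) ^ (-a) := by
  have hx0 : (0:ℝ) < x := by linarith
  have hu : 0 < x⁻¹ := by positivity
  have hu1 : x⁻¹ ≤ 1 := by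
    rw [inv_le_one_iff₀]; right; exact hx
  have h1 : x + 1 = x * (1 + x⁻¹) := by field_simp
  have h2 : (x+1) ^ (-a) = x ^ (-a) * (1+x⁻¹) ^ (-a) := by
    rw [h1, Real.mul_rpow hx0.le (by positivity)]
  have h3 : x ^ (-a-1) = x ^ (-a) * x⁻¹ := by
    rw [show -a-1 = -a + -1 by ring, Real.rpow_add hx0, Real.rpow_neg_one]
  have hcore := core_lower ha hu hu1
  have hnn : (0:ℝ) ≤ x ^ (-a) := (Real.rpow_pos_of_pos hx0 _).le
  rw [h2, h3]
  have h6 := mul_le_mul_of_nonneg_left hcore hnn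
  ring_nf at h6 ⊢
  linarith

lemma diff_nonneg' {a x : ℝ} (ha : 0 < a) (hx : 0 < x) :
    0 ≤ x ^ (-a) - (x+1) ^ (-a) := by
  have := Real.rpow_le_rpow_of_nonpos hx (by linarith : x ≤ x + 1) (by linarith : -a ≤ 0)
  linarith

lemma tele_hasSum {b : ℝ} (hb : 0 < b) (N : ℕ) (hN : 1 ≤ N) :
    HasSum (fun n : ℕ => if N ≤ n then ((n:ℝ) ^ (-b) - ((n:ℝ)+1) ^ (-b)) else 0)
      ((N:ℝ) ^ (-b)) := by
  set f : ℕ → ℝ := fun n => if N ≤ n then ((n:ℝ) ^ (-b) - ((n:ℝ)+1) ^ (-b)) else 0 with hf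
  have hshift : ∀ j : ℕ, f (N + j) = ((N+j:ℕ):ℝ) ^ (-b) - (((N+j+1:ℕ)):ℝ) ^ (-b) := by
    intro j
    simp only [hf]
    rw [if_pos (Nat.le_add_right N j)]
    push_cast
    ring_nf
  have hpos : ∀ n : ℕ, N ≤ n → (0:ℝ) < (n:ℝ) := by
    intro n hn; exact_mod_cast lt_of_lt_of_le hN hn
  have key : HasSum (fun j : ℕ => f (N + j)) ((N:ℝ) ^ (-b)) := by
    rw [hasSum_iff_tendsto_nat_of_nonneg]
    · have hps : ∀ M : ℕ, ∑ j ∈ Finset.range M, f (N + j)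
          = (N:ℝ) ^ (-b) - ((N+M:ℕ):ℝ) ^ (-b) := by
        intro M
        calc ∑ j ∈ Finset.range M, f (N + j)
            = ∑ j ∈ Finset.range M, (((N+j:ℕ):ℝ) ^ (-b) - ((N+(j+1):ℕ):ℝ) ^ (-b)) :=
              Finset.sum_congr rfl (fun j _ => hshift j)
          _ = ((N+0:ℕ):ℝ) ^ (-b) - ((N+M:ℕ):ℝ) ^ (-b) :=
              Finset.sum_range_sub' (fun j : ℕ => ((N+j:ℕ):ℝ) ^ (-b)) M
          _ = (N:ℝ) ^ (-b) - ((N+M:ℕ):ℝ) ^ (-b) := by norm_num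
      simp only [hps]
      have h0 : Filter.Tendsto (fun M : ℕ => ((N+M:ℕ):ℝ) ^ (-b)) Filter.atTop (nhds 0) := by
        have h1 : Filter.Tendsto (fun M : ℕ => N + M) Filter.atTop Filter.atTop :=
          Filter.tendsto_atTop_mono (fun M => Nat.le_add_left M N) Filter.tendsto_id
        exact (tendsto_rpow_neg_atTop hb).comp (tendsto_natCast_atTop_atTop.comp h1)
      simpa using Filter.Tendsto.sub tendsto_const_nhds h0
    · intro j
      rw [hshift j]
      have := diff_nonneg' hb (hpos (N+j) (Nat.le_add_right N j))
      push_cast at this ⊢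
      linarith
  have hinj : Function.Injective (fun j : ℕ => N + j) := fun a b h =>
    Nat.add_left_cancel h
  have hzero : ∀ n : ℕ, n ∉ Set.range (fun j : ℕ => N + j) → f n = 0 := by
    intro n hn
    have : ¬ (N ≤ n) := by
      intro h
      exact hn ⟨n - N, show N + (n - N) = n by omega⟩
    simp only [hf, if_neg this]
  have := (Function.Injective.hasSum_iff hinj hzero).mp key
  exact this

lemma geo_tail {x : ℝ} (h0 : 0 ≤ x) (h1 : x < 1) (L : ℕ) :
    HasSum (fun ℓ : ℕ => if L ≤ ℓ then x ^ ℓ else 0) (x ^ L * (1-x)⁻¹) := by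
  set f : ℕ → ℝ := fun ℓ => if L ≤ ℓ then x ^ ℓ else 0 with hf
  have key : HasSum (fun j : ℕ => f (L + j)) (x ^ L * (1-x)⁻¹) := by
    have : (fun j : ℕ => f (L + j)) = fun j : ℕ => x ^ L * x ^ j := by
      funext j
      simp only [hf, if_pos (Nat.le_add_right L j), pow_add]
    rw [this]
    exact (hasSum_geometric_of_lt_one h0 h1).mul_left _
  have hinj : Function.Injective (fun j : ℕ => L + j) := fun a b h =>
    Nat.add_left_cancel h
  exact (Function.Injective.hasSum_iff hinj (by
    intro n hn
    have : ¬ (L ≤ n) := fun h => hn ⟨n - L, show L + (n - L) = n by omega⟩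
    simp only [hf, if_neg this])).mp key

lemma tele_summable {b : ℝ} (hb : 0 < b) (N : ℕ) (hN : 1 ≤ N) :
    Summable (fun n : ℕ => if N ≤ n then ((n:ℝ) ^ (-b) - ((n:ℝ)+1) ^ (-b)) else 0) :=
  (tele_hasSum hb N hN).summable

lemma tail_rpow_bound {a : ℝ} (ha : 1 < a) (N : ℕ) (hN : 1 ≤ N) :
    ∑' n : ℕ, (if N ≤ n then (n:ℝ) ^ (-a) else 0)
      ≤ (a+1)/(a-1) * (N:ℝ) ^ (1-a) := by
  have ha' : 0 < a - 1 := by linarith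
  have hpt : ∀ n : ℕ, (if N ≤ n then (n:ℝ) ^ (-a) else 0)
      ≤ (a+1)/(a-1) * (if N ≤ n then ((n:ℝ) ^ (-(a-1)) - ((n:ℝ)+1) ^ (-(a-1))) else 0) := by
    intro n
    by_cases hn : N ≤ n
    · rw [if_pos hn, if_pos hn]
      have hn1 : (1:ℝ) ≤ (n:ℝ) := by exact_mod_cast le_trans hN hn
      have := diff_lower ha' hn1
      rw [show -(a-1)-1 = -a by ring] at this
      rw [div_mul_eq_mul_div, le_div_iff₀ ha']
      have h2 : (a-1)/((a-1)+2) * (n:ℝ) ^ (-a) * ((a-1)+2)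
          ≤ ((n:ℝ) ^ (-(a-1)) - ((n:ℝ)+1) ^ (-(a-1))) * ((a-1)+2) := by
        apply mul_le_mul_of_nonneg_right this (by linarith)
      have h3 : (a-1)/((a-1)+2) * (n:ℝ) ^ (-a) * ((a-1)+2) = (n:ℝ) ^ (-a) * (a-1) := by
        field_simp
      calc (n:ℝ) ^ (-a) * (a-1) = (a-1)/((a-1)+2) * (n:ℝ) ^ (-a) * ((a-1)+2) := by rw [h3]
        _ ≤ ((n:ℝ) ^ (-(a-1)) - ((n:ℝ)+1) ^ (-(a-1))) * ((a-1)+2) := h2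
        _ = ((n:ℝ) ^ (-(a-1)) - ((n:ℝ)+1) ^ (-(a-1))) * (a+1) := by ring
        _ = (a+1) * ((n:ℝ) ^ (-(a-1)) - ((n:ℝ)+1) ^ (-(a-1))) := mul_comm _ _
    · simp [hn]
  have hs2 := tele_summable ha' N hN
  calc ∑' n : ℕ, (if N ≤ n then (n:ℝ) ^ (-a) else 0)
      ≤ ∑' n : ℕ, (a+1)/(a-1) *
          (if N ≤ n then ((n:ℝ) ^ (-(a-1)) - ((n:ℝ)+1) ^ (-(a-1))) else 0) := by
        apply Summable.tsum_le_tsum hpt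
        · apply Summable.of_nonneg_of_le _ hpt (hs2.mul_left _)
          intro n
          by_cases hn : N ≤ n
          · rw [if_pos hn]; positivity
          · simp [hn]
        · exact hs2.mul_left _
    _ = (a+1)/(a-1) * (N:ℝ) ^ (-(a-1)) := by
        rw [tsum_mul_left, (tele_hasSum ha' N hN).tsum_eq]
    _ = (a+1)/(a-1) * (N:ℝ) ^ (1-a) := by rw [show -(a-1) = 1-a by ring]

lemma chebyshev_log_sum (n : ℕ) :
    ∑ p ∈ Nat.primesBelow (n+1), Real.log p ≤ (n:ℝ) * Real.log 4 := by
  have h1 : ∑ p ∈ Nat.primesBelow (n+1), Real.log p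
      = Real.log (∏ p ∈ Nat.primesBelow (n+1), (p:ℝ)) := by
    rw [Real.log_prod]
    intro p hp
    have := (Nat.prime_of_mem_primesBelow hp).two_le
    positivity
  rw [h1]
  have h2 : ∏ p ∈ Nat.primesBelow (n+1), (p:ℝ) = ((primorial n : ℕ) : ℝ) := by
    rw [primorial]
    push_cast
    rfl
  rw [h2]
  have h3 : ((primorial n : ℕ) : ℝ) ≤ ((4^n : ℕ) : ℝ) := by
    exact_mod_cast primorial_le_4_pow n
  calc Real.log ((primorial n : ℕ) : ℝ) ≤ Real.log ((4^n : ℕ):ℝ) := by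
        apply Real.log_le_log _ h3
        exact_mod_cast primorial_pos n
    _ = (n:ℝ) * Real.log 4 := by
        push_cast
        rw [Real.log_pow]

lemma zpow_log_claim (k : ℕ) {δ : ℝ} (hδ : 0 < δ) :
    ∃ C1 : ℝ, 0 < C1 ∧ ∀ y X : ℝ, Real.log 2 ≤ y → y ≤ X →
      X ^ ((k:ℤ)-1) ≤ C1 * (y ^ ((k:ℤ)-1) * Real.exp (δ/2 * (X - y))) := by
  have hl2 : (0:ℝ) < Real.log 2 := Real.log_pos (by norm_num)
  cases k with
  | zero =>
    refine ⟨1, one_pos, fun y X hy hX => ?_⟩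
    have hy0 : 0 < y := lt_of_lt_of_le hl2 hy
    have hX0 : 0 < X := lt_of_lt_of_le hy0 hX
    simp only [Nat.cast_zero, zero_sub, zpow_neg, zpow_one, one_mul]
    have h1 : X⁻¹ ≤ y⁻¹ := by
      apply inv_anti₀ hy0 hX
    have h2 : (1:ℝ) ≤ Real.exp (δ/2 * (X - y)) := by
      rw [← Real.exp_zero]
      apply Real.exp_le_exp.mpr
      nlinarith
    calc X⁻¹ ≤ y⁻¹ := h1
      _ = y⁻¹ * 1 := (mul_one _).symm
      _ ≤ y⁻¹ * Real.exp (δ/2 * (X - y)) := by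
        apply mul_le_mul_of_nonneg_left h2 (by positivity)
  | succ m =>
    refine ⟨2^m * (1 + (2*m/δ)^m / (Real.log 2)^m), by positivity, fun y X hy hX => ?_⟩
    have hy0 : 0 < y := lt_of_lt_of_le hl2 hy
    have hX0 : 0 < X := lt_of_lt_of_le hy0 hX
    have hz : ((m+1:ℕ):ℤ) - 1 = (m:ℤ) := by push_cast; ring
    rw [hz, zpow_natCast, zpow_natCast]
    set t := X - y with ht
    have ht0 : 0 ≤ t := by simp [ht]; linarith
    have hE1 : (1:ℝ) ≤ Real.exp (δ/2 * t) := by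
      rw [← Real.exp_zero]; apply Real.exp_le_exp.mpr; positivity
    -- step A : X^m ≤ 2^m * (y^m + t^m)
    have hA : X^m ≤ 2^m * (y^m + t^m) := by
      have h1 : X = y + t := by ring
      have h2 : X ≤ 2 * max y t := by
        rcases le_total y t with h | h
        · rw [max_eq_right h]; linarith
        · rw [max_eq_left h]; linarith
      calc X^m ≤ (2 * max y t)^m := pow_le_pow_left₀ hX0.le h2 m
        _ = 2^m * (max y t)^m := mul_pow 2 _ m
        _ ≤ 2^m * (y^m + t^m) := by
          apply mul_le_mul_of_nonneg_left _ (by positivity)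
          rcases le_total y t with h | h
          · rw [max_eq_right h]; nlinarith [pow_nonneg hy0.le m]
          · rw [max_eq_left h]; nlinarith [pow_nonneg ht0 m]
    -- step B : t^m ≤ (2m/δ)^m * exp (δ/2 * t)
    have hB : t^m ≤ (2*m/δ)^m * Real.exp (δ/2 * t) := by
      rcases Nat.eq_zero_or_pos m with hm | hm
      · subst hm; simpa using hE1
      · have hm0 : (0:ℝ) < m := by exact_mod_cast hm
        have h1 : t ≤ 2*m/δ * Real.exp (δ/(2*m) * t) := by
          have h2 : δ/(2*m) * t ≤ Real.exp (δ/(2*m) * t) := by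
            have := Real.add_one_le_exp (δ/(2*m) * t)
            linarith [Real.exp_pos (δ/(2*m)*t)]
          have h3 : 0 < 2*m/δ := by positivity
          calc t = 2*m/δ * (δ/(2*m) * t) := by field_simp
            _ ≤ 2*m/δ * Real.exp (δ/(2*m) * t) := by
              apply mul_le_mul_of_nonneg_left h2 h3.le
        calc t^m ≤ (2*m/δ * Real.exp (δ/(2*m) * t))^m := pow_le_pow_left₀ ht0 h1 m
          _ = (2*m/δ)^m * (Real.exp (δ/(2*m) * t))^m := mul_pow _ _ m
          _ = (2*m/δ)^m * Real.exp (δ/2 * t) := by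
            rw [← Real.exp_nat_mul]
            congr 1
            field_simp
    -- step C : combine
    have hyml : (Real.log 2)^m ≤ y^m := pow_le_pow_left₀ hl2.le hy m
    have hlpos : (0:ℝ) < (Real.log 2)^m := by positivity
    have hymp : (0:ℝ) < y^m := by positivity
    have hkey : (2*m/δ)^m ≤ (2*m/δ)^m / (Real.log 2)^m * y^m := by
      rw [div_mul_eq_mul_div, le_div_iff₀ hlpos]
      apply mul_le_mul_of_nonneg_left hyml (by positivity)
    calc X^m ≤ 2^m * (y^m + t^m) := hA
      _ ≤ 2^m * (y^m * Real.exp (δ/2*t) + (2*m/δ)^m / (Real.log 2)^m * y^m * Real.exp (δ/2*t)) := by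
        apply mul_le_mul_of_nonneg_left _ (by positivity)
        have e1 : y^m ≤ y^m * Real.exp (δ/2*t) := by
          nlinarith
        have e2 : t^m ≤ (2*m/δ)^m / (Real.log 2)^m * y^m * Real.exp (δ/2*t) := by
          calc t^m ≤ (2*m/δ)^m * Real.exp (δ/2 * t) := hB
            _ ≤ ((2*m/δ)^m / (Real.log 2)^m * y^m) * Real.exp (δ/2*t) := by
              apply mul_le_mul_of_nonneg_right hkey (Real.exp_pos _).le
        linarith
      _ = 2^m * (1 + (2*m/δ)^m / (Real.log 2)^m) * (y^m * Real.exp (δ/2 * (X-y))) := by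
        rw [← ht]; ring

theorem prime_power_tail_sum_bound (k : ℕ) (σ₀ : ℝ) (h1 : 1/2 < σ₀) (h2 : σ₀ < 1) :
    ∃ C > 0, ∀ Q : ℝ, 2 ≤ Q →
      ∑ p ∈ Nat.primesBelow (⌊Q⌋₊ + 1), ∑' ℓ : ℕ,
        (if 1 ≤ ℓ ∧ Q < (p : ℝ)^ℓ then
          (ℓ : ℝ) ^ ((k : ℤ) - 1) * (Real.log p)^k / (p : ℝ) ^ ((ℓ : ℝ) * σ₀) else 0) ≤
      C * Q ^ ((1:ℝ)/2 - σ₀) * (Real.log Q) ^ ((k : ℤ) - 1) := by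
  have hδ : 0 < σ₀ - 1/2 := by linarith
  set σ₁ : ℝ := σ₀/2 + 1/4 with hσ₁def
  set a : ℝ := σ₀ + 1/2 with hadef
  have hσ₁pos : 0 < σ₁ := by rw [hσ₁def]; linarith
  have ha1 : 1 < a := by rw [hadef]; linarith
  have ha0 : 0 < a := by linarith
  obtain ⟨C1, hC1, hclaim⟩ := zpow_log_claim k hδ
  have h2σ : (0:ℝ) < 1 - (2:ℝ) ^ (-σ₁) := by
    have : (2:ℝ) ^ (-σ₁) < 1 :=
      Real.rpow_lt_one_of_one_lt_of_neg (by norm_num) (by linarith)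
    linarith
  set D : ℝ := (1 - (2:ℝ) ^ (-σ₁))⁻¹ with hDdef
  have hD : 0 < D := by rw [hDdef]; positivity
  have hlog4 : (0:ℝ) < Real.log 4 := Real.log_pos (by norm_num)
  set CB : ℝ := Real.log 4 * a * ((a+1)/(a-1)) with hCBdef
  have hCB : 0 < CB := by
    rw [hCBdef]
    have : 0 < a - 1 := by linarith
    positivity
  refine ⟨C1 * D * (Real.log 4 + CB), by positivity, fun Q hQ => ?_⟩
  have hQ0 : (0:ℝ) < Q := by linarith
  have hQ1 : (1:ℝ) < Q := by linarith
  have hlogQ2 : Real.log 2 ≤ Real.log Q := Real.log_le_log (by norm_num) hQ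
  have hlogQ0 : 0 < Real.log Q := Real.log_pos hQ1
  set K : ℝ := C1 * ((Real.log Q) ^ ((k:ℤ)-1) * Q ^ (-((σ₀-1/2)/2))) with hKdef
  have hK : 0 < K := by
    rw [hKdef]
    have h3 : (0:ℝ) < (Real.log Q) ^ ((k:ℤ)-1) := zpow_pos hlogQ0 _
    positivity
  -- per-prime facts
  set F := Nat.primesBelow (⌊Q⌋₊ + 1) with hFdef
  have hpfacts : ∀ p ∈ F, 2 ≤ p ∧ (p:ℝ) ≤ Q := by
    intro p hp
    have hprime := Nat.prime_of_mem_primesBelow hp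
    have hlt := Nat.lt_of_mem_primesBelow hp
    refine ⟨hprime.two_le, ?_⟩
    have : p ≤ ⌊Q⌋₊ := by omega
    calc (p:ℝ) ≤ (⌊Q⌋₊ : ℝ) := by exact_mod_cast this
      _ ≤ Q := Nat.floor_le hQ0.le
  -- step 1 : termwise bound
  have hterm : ∀ p ∈ F, ∀ ℓ : ℕ,
      (if 1 ≤ ℓ ∧ Q < (p : ℝ)^ℓ then
          (ℓ : ℝ) ^ ((k : ℤ) - 1) * (Real.log p)^k / (p : ℝ) ^ ((ℓ : ℝ) * σ₀) else 0)
      ≤ (K * Real.log p) * (if 1 ≤ ℓ ∧ Q < (p : ℝ)^ℓ then ((p:ℝ) ^ (-σ₁)) ^ ℓ else 0) := by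
    intro p hp ℓ
    obtain ⟨hp2, hpQ⟩ := hpfacts p hp
    have hp0 : (0:ℝ) < p := by positivity
    have hp1R : (1:ℝ) < p := by exact_mod_cast Nat.lt_of_lt_of_le one_lt_two hp2
    have hlogp : 0 < Real.log p := Real.log_pos hp1R
    by_cases hcond : 1 ≤ ℓ ∧ Q < (p : ℝ)^ℓ
    · rw [if_pos hcond, if_pos hcond]
      obtain ⟨hℓ1, hℓQ⟩ := hcond
      have hyX : Real.log Q ≤ (ℓ:ℝ) * Real.log p := by
        have := Real.log_le_log hQ0 hℓQ.le
        rwa [Real.log_pow] at this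
      have claim := hclaim (Real.log Q) ((ℓ:ℝ) * Real.log p) hlogQ2 hyX
      have hPpos : (0:ℝ) < Real.log p * ((p:ℝ) ^ ((ℓ:ℝ) * σ₀))⁻¹ := by positivity
      have hle := mul_le_mul_of_nonneg_right claim hPpos.le
      have eA : (ℓ : ℝ) ^ ((k : ℤ) - 1) * (Real.log p)^k / (p : ℝ) ^ ((ℓ : ℝ) * σ₀)
          = ((ℓ:ℝ) * Real.log p) ^ ((k:ℤ)-1) * (Real.log p * ((p:ℝ) ^ ((ℓ:ℝ) * σ₀))⁻¹) := by
        have e1 : (Real.log p)^k = (Real.log p) ^ ((k:ℤ)-1) * Real.log p := by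
          rw [← zpow_natCast (Real.log p) k, show (k:ℤ) = ((k:ℤ)-1)+1 by ring,
            zpow_add_one₀ (ne_of_gt hlogp)]
          norm_num
        rw [div_eq_mul_inv, e1, mul_zpow]
        ring
      have hxpl : ((p:ℝ) ^ (-σ₁)) ^ ℓ
          = (p:ℝ) ^ ((ℓ:ℝ) * ((σ₀-1/2)/2)) * ((p:ℝ) ^ ((ℓ:ℝ) * σ₀))⁻¹ := by
        rw [← Real.rpow_neg hp0.le, ← Real.rpow_add hp0,
          ← Real.rpow_natCast ((p:ℝ) ^ (-σ₁)) ℓ, ← Real.rpow_mul hp0.le]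
        congr 1
        rw [hσ₁def]; ring
      have hexpX : Real.exp ((σ₀-1/2)/2 * ((ℓ:ℝ) * Real.log p - Real.log Q))
          = (p:ℝ) ^ ((ℓ:ℝ) * ((σ₀-1/2)/2)) * Q ^ (-((σ₀-1/2)/2)) := by
        rw [show (σ₀-1/2)/2 * ((ℓ:ℝ) * Real.log p - Real.log Q)
            = Real.log p * ((ℓ:ℝ) * ((σ₀-1/2)/2)) + Real.log Q * (-((σ₀-1/2)/2)) by ring,
          Real.exp_add, ← Real.rpow_def_of_pos hp0, ← Real.rpow_def_of_pos hQ0]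
      calc (ℓ : ℝ) ^ ((k : ℤ) - 1) * (Real.log p)^k / (p : ℝ) ^ ((ℓ : ℝ) * σ₀)
          = ((ℓ:ℝ) * Real.log p) ^ ((k:ℤ)-1) * (Real.log p * ((p:ℝ) ^ ((ℓ:ℝ) * σ₀))⁻¹) := eA
        _ ≤ C1 * ((Real.log Q) ^ ((k:ℤ)-1)
              * Real.exp ((σ₀-1/2)/2 * ((ℓ:ℝ) * Real.log p - Real.log Q)))
              * (Real.log p * ((p:ℝ) ^ ((ℓ:ℝ) * σ₀))⁻¹) := hle
        _ = (K * Real.log p) * (((p:ℝ) ^ (-σ₁)) ^ ℓ) := by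
            rw [hexpX, hxpl, hKdef]; ring
    · rw [if_neg hcond, if_neg hcond, mul_zero]
  -- inner geometric sums
  set wsum : ℕ → ℝ := fun p =>
    ∑' ℓ : ℕ, (if 1 ≤ ℓ ∧ Q < (p:ℝ)^ℓ then ((p:ℝ) ^ (-σ₁)) ^ ℓ else 0) with hwdef
  have hxfacts : ∀ p ∈ F, 0 ≤ (p:ℝ) ^ (-σ₁) ∧ (p:ℝ) ^ (-σ₁) < 1 ∧
      (p:ℝ) ^ (-σ₁) ≤ (2:ℝ) ^ (-σ₁) := by
    intro p hp
    obtain ⟨hp2, hpQ⟩ := hpfacts p hp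
    have hp1R : (1:ℝ) < p := by exact_mod_cast Nat.lt_of_lt_of_le one_lt_two hp2
    have hp2R : (2:ℝ) ≤ p := by exact_mod_cast hp2
    exact ⟨Real.rpow_nonneg (by positivity) _,
      Real.rpow_lt_one_of_one_lt_of_neg hp1R (by linarith),
      Real.rpow_le_rpow_of_nonpos (by norm_num) hp2R (by linarith)⟩
  have hsum_ind : ∀ p ∈ F,
      Summable (fun ℓ : ℕ => if 1 ≤ ℓ ∧ Q < (p:ℝ)^ℓ then ((p:ℝ) ^ (-σ₁)) ^ ℓ else 0) := by
    intro p hp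
    obtain ⟨hx0, hx1, _⟩ := hxfacts p hp
    apply Summable.of_nonneg_of_le _ _ (summable_geometric_of_lt_one hx0 hx1)
    · intro ℓ; split
      · positivity
      · exact le_refl 0
    · intro ℓ; split
      · exact le_refl _
      · positivity
  have hterm_nonneg : ∀ p ∈ F, ∀ ℓ : ℕ,
      0 ≤ (if 1 ≤ ℓ ∧ Q < (p : ℝ)^ℓ then
          (ℓ : ℝ) ^ ((k : ℤ) - 1) * (Real.log p)^k / (p : ℝ) ^ ((ℓ : ℝ) * σ₀) else 0) := by
    intro p hp ℓ
    obtain ⟨hp2, _⟩ := hpfacts p hp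
    have hp1R : (1:ℝ) ≤ p := by exact_mod_cast Nat.le_of_lt (Nat.lt_of_lt_of_le one_lt_two hp2)
    split
    · apply div_nonneg _ (Real.rpow_nonneg (by positivity) _)
      exact mul_nonneg (zpow_nonneg (Nat.cast_nonneg ℓ) _)
        (pow_nonneg (Real.log_nonneg hp1R) k)
    · exact le_refl 0
  have step2 : ∀ p ∈ F,
      (∑' ℓ : ℕ, (if 1 ≤ ℓ ∧ Q < (p : ℝ)^ℓ then
          (ℓ : ℝ) ^ ((k : ℤ) - 1) * (Real.log p)^k / (p : ℝ) ^ ((ℓ : ℝ) * σ₀) else 0))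
      ≤ K * Real.log p * wsum p := by
    intro p hp
    have hs := hsum_ind p hp
    calc (∑' ℓ : ℕ, (if 1 ≤ ℓ ∧ Q < (p : ℝ)^ℓ then
            (ℓ : ℝ) ^ ((k : ℤ) - 1) * (Real.log p)^k / (p : ℝ) ^ ((ℓ : ℝ) * σ₀) else 0))
        ≤ ∑' ℓ : ℕ, (K * Real.log p) *
            (if 1 ≤ ℓ ∧ Q < (p : ℝ)^ℓ then ((p:ℝ) ^ (-σ₁)) ^ ℓ else 0) := by
          apply Summable.tsum_le_tsum (hterm p hp)
          · apply Summable.of_nonneg_of_le (hterm_nonneg p hp) (hterm p hp)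
            exact hs.mul_left _
          · exact hs.mul_left _
      _ = K * Real.log p * wsum p := by rw [tsum_mul_left, hwdef]
  -- case A bound for the inner sum
  have hwA : ∀ p ∈ F, (p:ℝ) ≤ Q ^ ((1:ℝ)/2) → wsum p ≤ Q ^ (-σ₁) * D := by
    intro p hp _
    obtain ⟨hp2, hpQ⟩ := hpfacts p hp
    have hp0 : (0:ℝ) < p := by positivity
    have hp1R : (1:ℝ) < p := by exact_mod_cast Nat.lt_of_lt_of_le one_lt_two hp2
    obtain ⟨hx0, hx1, hxle⟩ := hxfacts p hp
    have hex : ∃ n : ℕ, Q < (p:ℝ)^n := pow_unbounded_of_one_lt Q hp1R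
    set L := Nat.find hex with hLdef
    have hgeo := geo_tail hx0 hx1 L
    calc wsum p ≤ ∑' ℓ : ℕ, (if L ≤ ℓ then ((p:ℝ) ^ (-σ₁)) ^ ℓ else 0) := by
          rw [hwdef]
          dsimp only
          apply Summable.tsum_le_tsum _ (hsum_ind p hp) hgeo.summable
          intro ℓ
          by_cases hc : 1 ≤ ℓ ∧ Q < (p:ℝ)^ℓ
          · rw [if_pos hc, if_pos (Nat.find_min' hex hc.2)]
          · rw [if_neg hc]
            split
            · positivity
            · exact le_refl 0
      _ = ((p:ℝ) ^ (-σ₁)) ^ L * (1 - (p:ℝ) ^ (-σ₁))⁻¹ := hgeo.tsum_eq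
      _ ≤ Q ^ (-σ₁) * D := by
          apply mul_le_mul _ _ (inv_nonneg.mpr (by linarith)) (Real.rpow_nonneg hQ0.le _)
          · have hxL : ((p:ℝ) ^ (-σ₁)) ^ L = ((p:ℝ) ^ L) ^ (-σ₁) := by
              rw [← Real.rpow_natCast ((p:ℝ) ^ (-σ₁)) L, ← Real.rpow_mul hp0.le,
                show -σ₁ * (L:ℝ) = (L:ℝ) * -σ₁ by ring, Real.rpow_natCast_mul hp0.le]
            rw [hxL]
            exact Real.rpow_le_rpow_of_nonpos hQ0 (Nat.find_spec hex).le (by linarith)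
          · rw [hDdef]
            exact inv_anti₀ h2σ (by linarith)
  -- case B bound for the inner sum
  have hwB : ∀ p ∈ F, ¬((p:ℝ) ≤ Q ^ ((1:ℝ)/2)) → wsum p ≤ (p:ℝ) ^ (-a) * D := by
    intro p hp _
    obtain ⟨hp2, hpQ⟩ := hpfacts p hp
    have hp0 : (0:ℝ) < p := by positivity
    obtain ⟨hx0, hx1, hxle⟩ := hxfacts p hp
    have hgeo := geo_tail hx0 hx1 2
    calc wsum p ≤ ∑' ℓ : ℕ, (if 2 ≤ ℓ then ((p:ℝ) ^ (-σ₁)) ^ ℓ else 0) := by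
          rw [hwdef]
          dsimp only
          apply Summable.tsum_le_tsum _ (hsum_ind p hp) hgeo.summable
          intro ℓ
          by_cases hc : 1 ≤ ℓ ∧ Q < (p:ℝ)^ℓ
          · have h2ℓ : 2 ≤ ℓ := by
              rcases Nat.lt_or_ge ℓ 2 with hl | hl
              · exfalso
                have : ℓ = 1 := by omega
                rw [this, pow_one] at hc
                exact absurd hc.2 (not_lt.mpr hpQ)
              · exact hl
            rw [if_pos hc, if_pos h2ℓ]
          · rw [if_neg hc]
            split
            · positivity
            · exact le_refl 0
      _ = ((p:ℝ) ^ (-σ₁)) ^ 2 * (1 - (p:ℝ) ^ (-σ₁))⁻¹ := hgeo.tsum_eq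
      _ ≤ (p:ℝ) ^ (-a) * D := by
          apply mul_le_mul _ _ (inv_nonneg.mpr (by linarith)) (Real.rpow_nonneg hp0.le _)
          · have hx2 : ((p:ℝ) ^ (-σ₁)) ^ 2 = (p:ℝ) ^ (-a) := by
              rw [← Real.rpow_natCast ((p:ℝ) ^ (-σ₁)) 2, ← Real.rpow_mul hp0.le]
              congr 1
              rw [hσ₁def, hadef]
              norm_num
              ring
            rw [hx2]
          · rw [hDdef]
            exact inv_anti₀ h2σ (by linarith)
  -- the Abel-summation / Chebyshev bound for case B primes
  have ha1' : (0:ℝ) < a - 1 := by linarith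
  have hQh0 : (0:ℝ) < Q ^ ((1:ℝ)/2) := by positivity
  have hQh1 : (1:ℝ) ≤ Q ^ ((1:ℝ)/2) := Real.one_le_rpow hQ1.le (by norm_num)
  set N₀ : ℕ := ⌊Q ^ ((1:ℝ)/2)⌋₊ + 1 with hN0def
  have hN₀gt : Q ^ ((1:ℝ)/2) < (N₀:ℝ) := by
    rw [hN0def]
    push_cast
    exact Nat.lt_floor_add_one _
  have hN₀1 : 1 ≤ N₀ := by omega
  have hVB : ∑ p ∈ F.filter (fun p : ℕ => ¬((p:ℝ) ≤ Q ^ ((1:ℝ)/2))), Real.log p * (p:ℝ) ^ (-a)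
      ≤ CB * ((Q ^ ((1:ℝ)/2)) ^ (1-a)) := by
    have hFBmem : ∀ p ∈ F.filter (fun p : ℕ => ¬((p:ℝ) ≤ Q ^ ((1:ℝ)/2))),
        p.Prime ∧ 1 ≤ p ∧ ¬((p:ℝ) ≤ Q ^ ((1:ℝ)/2)) := by
      intro p hp
      obtain ⟨hpF, hpc⟩ := Finset.mem_filter.mp hp
      exact ⟨Nat.prime_of_mem_primesBelow hpF, (Nat.prime_of_mem_primesBelow hpF).one_le, hpc⟩
    have htele : ∀ p ∈ F.filter (fun p : ℕ => ¬((p:ℝ) ≤ Q ^ ((1:ℝ)/2))),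
        Real.log p * (p:ℝ) ^ (-a)
        = ∑' n : ℕ, Real.log p *
            (if p ≤ n then ((n:ℝ) ^ (-a) - ((n:ℝ)+1) ^ (-a)) else 0) := by
      intro p hp
      rw [tsum_mul_left, (tele_hasSum ha0 p (hFBmem p hp).2.1).tsum_eq]
    rw [Finset.sum_congr rfl htele,
      ← Summable.tsum_finsetSum (fun p hp => Summable.mul_left _ (tele_summable ha0 p (hFBmem p hp).2.1))]
    have hpoint : ∀ n : ℕ,
        (∑ p ∈ F.filter (fun p : ℕ => ¬((p:ℝ) ≤ Q ^ ((1:ℝ)/2))), Real.log p *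
            (if p ≤ n then ((n:ℝ) ^ (-a) - ((n:ℝ)+1) ^ (-a)) else 0))
        ≤ Real.log 4 * a * (if N₀ ≤ n then (n:ℝ) ^ (-a) else 0) := by
      intro n
      by_cases hn : N₀ ≤ n
      · rw [if_pos hn]
        have hn1 : (1:ℝ) ≤ (n:ℝ) := by exact_mod_cast le_trans hN₀1 hn
        have hn0 : (0:ℝ) < (n:ℝ) := by linarith
        have hcn0 : 0 ≤ (n:ℝ) ^ (-a) - ((n:ℝ)+1) ^ (-a) := diff_nonneg' ha0 hn0
        have hsub2 : (F.filter (fun p : ℕ => ¬((p:ℝ) ≤ Q ^ ((1:ℝ)/2)))).filter (· ≤ n)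
            ⊆ Nat.primesBelow (n+1) := by
          intro p hp
          obtain ⟨hp1, hp2'⟩ := Finset.mem_filter.mp hp
          exact Nat.mem_primesBelow.mpr ⟨by omega, (hFBmem p hp1).1⟩
        calc (∑ p ∈ F.filter (fun p : ℕ => ¬((p:ℝ) ≤ Q ^ ((1:ℝ)/2))), Real.log p *
                (if p ≤ n then ((n:ℝ) ^ (-a) - ((n:ℝ)+1) ^ (-a)) else 0))
            = ∑ p ∈ F.filter (fun p : ℕ => ¬((p:ℝ) ≤ Q ^ ((1:ℝ)/2))),
                (if p ≤ n then Real.log p * ((n:ℝ) ^ (-a) - ((n:ℝ)+1) ^ (-a)) else 0) :=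
              Finset.sum_congr rfl (fun p _ => by rw [mul_ite, mul_zero])
          _ = ∑ p ∈ (F.filter (fun p : ℕ => ¬((p:ℝ) ≤ Q ^ ((1:ℝ)/2)))).filter (· ≤ n),
                Real.log p * ((n:ℝ) ^ (-a) - ((n:ℝ)+1) ^ (-a)) :=
              (Finset.sum_filter _ _).symm
          _ = (∑ p ∈ (F.filter (fun p : ℕ => ¬((p:ℝ) ≤ Q ^ ((1:ℝ)/2)))).filter (· ≤ n),
                Real.log p) * ((n:ℝ) ^ (-a) - ((n:ℝ)+1) ^ (-a)) := by
              rw [Finset.sum_mul]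
          _ ≤ ((n:ℝ) * Real.log 4) * ((n:ℝ) ^ (-a) - ((n:ℝ)+1) ^ (-a)) := by
              apply mul_le_mul_of_nonneg_right _ hcn0
              calc (∑ p ∈ (F.filter (fun p : ℕ => ¬((p:ℝ) ≤ Q ^ ((1:ℝ)/2)))).filter (· ≤ n),
                    Real.log p)
                  ≤ ∑ p ∈ Nat.primesBelow (n+1), Real.log p := by
                    apply Finset.sum_le_sum_of_subset_of_nonneg hsub2
                    intro i hi _
                    have : (1:ℝ) ≤ i := by
                      exact_mod_cast (Nat.prime_of_mem_primesBelow hi).one_le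
                    exact Real.log_nonneg this
                _ ≤ (n:ℝ) * Real.log 4 := chebyshev_log_sum n
          _ ≤ Real.log 4 * a * (n:ℝ) ^ (-a) := by
              have hd := diff_upper ha0 hn1
              have hnn : (n:ℝ) * (n:ℝ) ^ (-a-1) = (n:ℝ) ^ (-a) := by
                nth_rewrite 1 [← Real.rpow_one (n:ℝ)]
                rw [← Real.rpow_add hn0]
                congr 1
                ring
              calc ((n:ℝ) * Real.log 4) * ((n:ℝ) ^ (-a) - ((n:ℝ)+1) ^ (-a))
                  ≤ ((n:ℝ) * Real.log 4) * (a * (n:ℝ) ^ (-a-1)) := by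
                    apply mul_le_mul_of_nonneg_left hd (by positivity)
                _ = Real.log 4 * a * ((n:ℝ) * (n:ℝ) ^ (-a-1)) := by ring
                _ = Real.log 4 * a * (n:ℝ) ^ (-a) := by rw [hnn]
      · rw [if_neg hn, mul_zero]
        apply le_of_eq
        apply Finset.sum_eq_zero
        intro p hp
        have hnQ : (n:ℝ) ≤ Q ^ ((1:ℝ)/2) := by
          have hnfl : n ≤ ⌊Q ^ ((1:ℝ)/2)⌋₊ := by omega
          calc (n:ℝ) ≤ (⌊Q ^ ((1:ℝ)/2)⌋₊ : ℝ) := by exact_mod_cast hnfl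
            _ ≤ Q ^ ((1:ℝ)/2) := Nat.floor_le hQh0.le
        have hpn : ¬(p ≤ n) := by
          intro hc
          apply (hFBmem p hp).2.2
          calc (p:ℝ) ≤ (n:ℝ) := by exact_mod_cast hc
            _ ≤ Q ^ ((1:ℝ)/2) := hnQ
        rw [if_neg hpn, mul_zero]
    have hsumR : Summable (fun n : ℕ => if N₀ ≤ n then (n:ℝ) ^ (-a) else 0) := by
      apply Summable.of_nonneg_of_le _ _ (Real.summable_nat_rpow.mpr (by linarith : -a < -1))
      · intro n; split
        · exact Real.rpow_nonneg (Nat.cast_nonneg n) _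
        · exact le_refl 0
      · intro n; split
        · exact le_refl _
        · exact Real.rpow_nonneg (Nat.cast_nonneg n) _
    calc (∑' n : ℕ, ∑ p ∈ F.filter (fun p : ℕ => ¬((p:ℝ) ≤ Q ^ ((1:ℝ)/2))), Real.log p *
            (if p ≤ n then ((n:ℝ) ^ (-a) - ((n:ℝ)+1) ^ (-a)) else 0))
        ≤ ∑' n : ℕ, Real.log 4 * a * (if N₀ ≤ n then (n:ℝ) ^ (-a) else 0) := by
          apply Summable.tsum_le_tsum hpoint
          · exact summable_sum
              (fun p hp => Summable.mul_left _ (tele_summable ha0 p (hFBmem p hp).2.1))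
          · exact hsumR.mul_left _
      _ = Real.log 4 * a * (∑' n : ℕ, (if N₀ ≤ n then (n:ℝ) ^ (-a) else 0)) := tsum_mul_left
      _ ≤ Real.log 4 * a * ((a+1)/(a-1) * (N₀:ℝ) ^ (1-a)) := by
          apply mul_le_mul_of_nonneg_left (tail_rpow_bound ha1 N₀ hN₀1) (by positivity)
      _ ≤ CB * ((Q ^ ((1:ℝ)/2)) ^ (1-a)) := by
          rw [hCBdef]
          have hr : (N₀:ℝ) ^ (1-a) ≤ (Q ^ ((1:ℝ)/2)) ^ (1-a) :=
            Real.rpow_le_rpow_of_nonpos hQh0 hN₀gt.le (by linarith)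
          calc Real.log 4 * a * ((a+1)/(a-1) * (N₀:ℝ) ^ (1-a))
              = Real.log 4 * a * ((a+1)/(a-1)) * (N₀:ℝ) ^ (1-a) := by ring
            _ ≤ Real.log 4 * a * ((a+1)/(a-1)) * ((Q ^ ((1:ℝ)/2)) ^ (1-a)) := by
                apply mul_le_mul_of_nonneg_left hr (by positivity)
  -- assemble the two pieces
  have hsplit := Finset.sum_filter_add_sum_filter_not F (fun p : ℕ => (p:ℝ) ≤ Q ^ ((1:ℝ)/2))
    (fun p => K * Real.log p * wsum p)
  have hlogp_pos : ∀ p ∈ F, 0 < Real.log p := by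
    intro p hp
    obtain ⟨hp2, _⟩ := hpfacts p hp
    exact Real.log_pos (by exact_mod_cast Nat.lt_of_lt_of_le one_lt_two hp2)
  have hA : ∑ p ∈ F.filter (fun p : ℕ => (p:ℝ) ≤ Q ^ ((1:ℝ)/2)), K * Real.log p * wsum p
      ≤ K * D * Real.log 4 * (Q ^ ((1:ℝ)/2) * Q ^ (-σ₁)) := by
    have hsubA : F.filter (fun p : ℕ => (p:ℝ) ≤ Q ^ ((1:ℝ)/2))
        ⊆ Nat.primesBelow (⌊Q ^ ((1:ℝ)/2)⌋₊ + 1) := by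
      intro p hp
      obtain ⟨hpF, hpc⟩ := Finset.mem_filter.mp hp
      have := Nat.le_floor hpc
      exact Nat.mem_primesBelow.mpr ⟨by omega, Nat.prime_of_mem_primesBelow hpF⟩
    calc ∑ p ∈ F.filter (fun p : ℕ => (p:ℝ) ≤ Q ^ ((1:ℝ)/2)), K * Real.log p * wsum p
        ≤ ∑ p ∈ F.filter (fun p : ℕ => (p:ℝ) ≤ Q ^ ((1:ℝ)/2)),
            (K * (Q ^ (-σ₁) * D)) * Real.log p := by
          apply Finset.sum_le_sum
          intro p hp
          obtain ⟨hpF, hpc⟩ := Finset.mem_filter.mp hp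
          have h := hwA p hpF hpc
          have hlp := hlogp_pos p hpF
          calc K * Real.log p * wsum p ≤ K * Real.log p * (Q ^ (-σ₁) * D) := by
                apply mul_le_mul_of_nonneg_left h (by positivity)
            _ = (K * (Q ^ (-σ₁) * D)) * Real.log p := by ring
      _ = (K * (Q ^ (-σ₁) * D)) * ∑ p ∈ F.filter (fun p : ℕ => (p:ℝ) ≤ Q ^ ((1:ℝ)/2)),
            Real.log p := by rw [← Finset.mul_sum]
      _ ≤ (K * (Q ^ (-σ₁) * D)) * (Q ^ ((1:ℝ)/2) * Real.log 4) := by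
          apply mul_le_mul_of_nonneg_left _ (by positivity)
          calc ∑ p ∈ F.filter (fun p : ℕ => (p:ℝ) ≤ Q ^ ((1:ℝ)/2)), Real.log p
              ≤ ∑ p ∈ Nat.primesBelow (⌊Q ^ ((1:ℝ)/2)⌋₊ + 1), Real.log p := by
                apply Finset.sum_le_sum_of_subset_of_nonneg hsubA
                intro i hi _
                exact Real.log_nonneg (by
                  exact_mod_cast (Nat.prime_of_mem_primesBelow hi).one_le)
            _ ≤ (⌊Q ^ ((1:ℝ)/2)⌋₊ : ℝ) * Real.log 4 := chebyshev_log_sum _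
            _ ≤ Q ^ ((1:ℝ)/2) * Real.log 4 := by
                apply mul_le_mul_of_nonneg_right (Nat.floor_le hQh0.le) hlog4.le
      _ = K * D * Real.log 4 * (Q ^ ((1:ℝ)/2) * Q ^ (-σ₁)) := by ring
  have hB : ∑ p ∈ F.filter (fun p : ℕ => ¬((p:ℝ) ≤ Q ^ ((1:ℝ)/2))), K * Real.log p * wsum p
      ≤ K * D * (CB * ((Q ^ ((1:ℝ)/2)) ^ (1-a))) := by
    calc ∑ p ∈ F.filter (fun p : ℕ => ¬((p:ℝ) ≤ Q ^ ((1:ℝ)/2))), K * Real.log p * wsum p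
        ≤ ∑ p ∈ F.filter (fun p : ℕ => ¬((p:ℝ) ≤ Q ^ ((1:ℝ)/2))),
            (K * D) * (Real.log p * (p:ℝ) ^ (-a)) := by
          apply Finset.sum_le_sum
          intro p hp
          obtain ⟨hpF, hpc⟩ := Finset.mem_filter.mp hp
          have h := hwB p hpF hpc
          have hlp := hlogp_pos p hpF
          calc K * Real.log p * wsum p ≤ K * Real.log p * ((p:ℝ) ^ (-a) * D) := by
                apply mul_le_mul_of_nonneg_left h (by positivity)
            _ = (K * D) * (Real.log p * (p:ℝ) ^ (-a)) := by ring
      _ = (K * D) * ∑ p ∈ F.filter (fun p : ℕ => ¬((p:ℝ) ≤ Q ^ ((1:ℝ)/2))),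
            Real.log p * (p:ℝ) ^ (-a) := by rw [← Finset.mul_sum]
      _ ≤ (K * D) * (CB * ((Q ^ ((1:ℝ)/2)) ^ (1-a))) := by
          apply mul_le_mul_of_nonneg_left hVB (by positivity)
      _ = K * D * (CB * ((Q ^ ((1:ℝ)/2)) ^ (1-a))) := by ring
  -- final exponent bookkeeping
  have e1 : Q ^ (-((σ₀-1/2)/2)) * (Q ^ ((1:ℝ)/2) * Q ^ (-σ₁)) = Q ^ ((1:ℝ)/2-σ₀) := by
    rw [← Real.rpow_add hQ0, ← Real.rpow_add hQ0]
    congr 1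
    rw [hσ₁def]
    ring
  have e2 : Q ^ (-((σ₀-1/2)/2)) * ((Q ^ ((1:ℝ)/2)) ^ (1-a)) = Q ^ ((1:ℝ)/2-σ₀) := by
    rw [← Real.rpow_mul hQ0.le, ← Real.rpow_add hQ0]
    congr 1
    rw [hadef]
    ring
  calc ∑ p ∈ Nat.primesBelow (⌊Q⌋₊ + 1), ∑' ℓ : ℕ,
        (if 1 ≤ ℓ ∧ Q < (p : ℝ)^ℓ then
          (ℓ : ℝ) ^ ((k : ℤ) - 1) * (Real.log p)^k / (p : ℝ) ^ ((ℓ : ℝ) * σ₀) else 0)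
      ≤ ∑ p ∈ F, K * Real.log p * wsum p := Finset.sum_le_sum step2
    _ = (∑ p ∈ F.filter (fun p : ℕ => (p:ℝ) ≤ Q ^ ((1:ℝ)/2)), K * Real.log p * wsum p)
        + ∑ p ∈ F.filter (fun p : ℕ => ¬((p:ℝ) ≤ Q ^ ((1:ℝ)/2))), K * Real.log p * wsum p :=
        hsplit.symm
    _ ≤ K * D * Real.log 4 * (Q ^ ((1:ℝ)/2) * Q ^ (-σ₁))
        + K * D * (CB * ((Q ^ ((1:ℝ)/2)) ^ (1-a))) := add_le_add hA hB
    _ = C1 * D * (Real.log 4 + CB) * Q ^ ((1:ℝ)/2 - σ₀) * (Real.log Q) ^ ((k:ℤ)-1) := by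
        rw [hKdef]
        rw [show C1 * ((Real.log Q) ^ ((k:ℤ)-1) * Q ^ (-((σ₀-1/2)/2))) * D * Real.log 4
              * (Q ^ ((1:ℝ)/2) * Q ^ (-σ₁))
            = C1 * D * Real.log 4 * (Real.log Q) ^ ((k:ℤ)-1)
              * (Q ^ (-((σ₀-1/2)/2)) * (Q ^ ((1:ℝ)/2) * Q ^ (-σ₁))) by ring, e1]
        rw [show C1 * ((Real.log Q) ^ ((k:ℤ)-1) * Q ^ (-((σ₀-1/2)/2))) * D
              * (CB * ((Q ^ ((1:ℝ)/2)) ^ (1-a)))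
            = C1 * D * CB * (Real.log Q) ^ ((k:ℤ)-1)
              * (Q ^ (-((σ₀-1/2)/2)) * ((Q ^ ((1:ℝ)/2)) ^ (1-a))) by ring, e2]
        ring
end
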